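/- Let μ ≠ 0, t > 0, and (γ_r)_{r>0} positive with γ_r → 0 and r·γ_r → ∞. The family {r·γ_r·T_{μ√r,t} : r > 0} satisfies the LDP with speed 1/γ_r and good rate function J̃(b) = μ²b/2 for b ≥ 0, J̃(b) = ∞ for b < 0. -/

import Mathlib

open Real Filter MeasureTheory

/-- Extended-real logarithm of a probability value, sending `0` to `⊥`. -/
noncomputable def eLogProb (x : ENNReal) : EReal :=
  if x = 0 then ⊥ else ((Real.log x.toReal : ℝ) : EReal)

/-- The rate function `J̃(b) = μ²b/2` on `[0,∞)`, `∞` for `b < 0`. -/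
noncomputable def rateJtilde (μ b : ℝ) : EReal :=
  if 0 ≤ b then ((μ ^ 2 * b / 2 : ℝ) : EReal) else ⊤

open Set Topology

/-!
Write `X_r = r γ_r T_r`. For `b > 0` and `r` large, the law of `T_r` gives
`P(X_r > b) = (2/π) ∫₀^M exp(-c (1 + y²)) / (1 + y²) dy` with `c = μ² b / (2 γ_r)`.
Bounding the integrand by `exp(-c) / (1 + y²)` gives `P(X_r > b) ≤ exp(-c)`, and restricting
the integral to `[0, ε]` gives `P(X_r > b) ≥ C_ε exp(-c (1 + ε²))`, so on the scale `γ_r log`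
the tail beyond `b` is `-μ² b / 2`. Since `X_r ≥ 0` and `J̃` increases on `[0, ∞)`, the upper
bound for any set reduces to such a tail. For the lower bound, an interval `(b₁, b₂]` inside an
open set carries half of the lower bound for the tail beyond `b₁`, because the tail beyond `b₂`
is exponentially smaller.
-/

noncomputable def lastZeroIntegral (c M : ℝ) : ℝ :=
  ∫ y in (0:ℝ)..M, exp (-(c * (1 + y ^ 2))) / (1 + y ^ 2)

lemma continuous_lastZeroIntegrand (c : ℝ) :
    Continuous fun y : ℝ => exp (-(c * (1 + y ^ 2))) / (1 + y ^ 2) :=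
  Continuous.div (by fun_prop) (by fun_prop) fun y => by positivity

lemma two_div_pi_mul_lastZeroIntegral_le {c M : ℝ} (hc : 0 ≤ c) (hM : 0 ≤ M) :
    (2 / π) * lastZeroIntegral c M ≤ exp (-c) := by
  have hbound : ∀ y ∈ Icc 0 M,
      exp (-(c * (1 + y ^ 2))) / (1 + y ^ 2) ≤ exp (-c) * (1 / (1 + y ^ 2)) := by
    intro y _
    rw [mul_one_div]
    gcongr
    nlinarith [sq_nonneg y]
  calc (2 / π) * lastZeroIntegral c M
      ≤ (2 / π) * ∫ y in (0:ℝ)..M, exp (-c) * (1 / (1 + y ^ 2)) := by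
        gcongr
        exact intervalIntegral.integral_mono_on hM
          ((continuous_lastZeroIntegrand c).intervalIntegrable _ _)
          (Continuous.intervalIntegrable (continuous_const.mul
            (continuous_const.div (by fun_prop) fun y => by positivity)) _ _) hbound
    _ = (2 / π) * (exp (-c) * arctan M) := by
        rw [intervalIntegral.integral_const_mul, integral_one_div_one_add_sq, arctan_zero,
          sub_zero]
    _ ≤ (2 / π) * (exp (-c) * (π / 2)) := by gcongr; exact (arctan_lt_pi_div_two M).le
    _ = exp (-c) := by field_simp

lemma mul_le_lastZeroIntegral {c ε M : ℝ} (hc : 0 ≤ c) (hε : 0 < ε) (hεM : ε ≤ M) :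
    ε * (exp (-(c * (1 + ε ^ 2))) / (1 + ε ^ 2)) ≤ lastZeroIntegral c M := by
  have hbound : ∀ y ∈ Icc 0 ε,
      exp (-(c * (1 + ε ^ 2))) / (1 + ε ^ 2) ≤ exp (-(c * (1 + y ^ 2))) / (1 + y ^ 2) := by
    rintro y ⟨hy0, hyε⟩
    have : y ^ 2 ≤ ε ^ 2 := by nlinarith
    gcongr
  calc ε * (exp (-(c * (1 + ε ^ 2))) / (1 + ε ^ 2))
      = ∫ _ in (0:ℝ)..ε, exp (-(c * (1 + ε ^ 2))) / (1 + ε ^ 2) := by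
        rw [intervalIntegral.integral_const, sub_zero, smul_eq_mul]
    _ ≤ ∫ y in (0:ℝ)..ε, exp (-(c * (1 + y ^ 2))) / (1 + y ^ 2) :=
        intervalIntegral.integral_mono_on hε.le intervalIntegrable_const
          ((continuous_lastZeroIntegrand c).intervalIntegrable _ _) hbound
    _ ≤ lastZeroIntegral c M :=
        intervalIntegral.integral_mono_interval le_rfl hε.le hεM
          (Eventually.of_forall fun y => by positivity)
          ((continuous_lastZeroIntegrand c).intervalIntegrable _ _)

lemma eLogProb_of_ne_zero {x : ENNReal} (hx : x ≠ 0) : eLogProb x = log x.toReal := if_neg hx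

lemma coe_mul_eLogProb_le {g u : ℝ} {x : ENNReal} (hg : 0 < g) (hx : x ≠ ⊤)
    (h : x.toReal ≤ exp (u / g)) : (g : EReal) * eLogProb x ≤ u := by
  rcases eq_or_ne x 0 with rfl | hx0
  · simp [eLogProb, EReal.coe_mul_bot_of_pos hg]
  rw [eLogProb_of_ne_zero hx0, ← EReal.coe_mul, EReal.coe_le_coe_iff]
  have hlog : log x.toReal ≤ u / g :=
    (log_le_log (ENNReal.toReal_pos hx0 hx) h).trans_eq (log_exp _)
  calc g * log x.toReal ≤ g * (u / g) := by gcongr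
    _ = u := by field_simp

lemma le_coe_mul_eLogProb {g u : ℝ} {x : ENNReal} (hg : 0 < g)
    (h : exp (u / g) ≤ x.toReal) : (u : EReal) ≤ g * eLogProb x := by
  have hx0 : x ≠ 0 := by rintro rfl; simp at h; linarith [exp_pos (u / g)]
  rw [eLogProb_of_ne_zero hx0, ← EReal.coe_mul, EReal.coe_le_coe_iff]
  have hlog : u / g ≤ log x.toReal := (log_exp _).symm.trans_le (log_le_log (exp_pos _) h)
  calc u = g * (u / g) := by field_simp
    _ ≤ g * log x.toReal := by gcongr

section Asymptotics

variable {ι Ω : Type*} [MeasurableSpace Ω] {P : Measure Ω}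
  {l : Filter ι} {g : ι → ℝ} {S : ι → Set Ω}

lemma limsup_coe_mul_eLogProb_le [IsFiniteMeasure P] {u : ℝ}
    (h : ∀ᶠ i in l, 0 < g i ∧ P.real (S i) ≤ exp (u / g i)) :
    limsup (fun i => (g i : EReal) * eLogProb (P (S i))) l ≤ u :=
  limsup_le_of_le (by isBoundedDefault) <| h.mono fun _ hi =>
    coe_mul_eLogProb_le hi.1 (measure_ne_top _ _) hi.2

lemma le_liminf_coe_mul_eLogProb [l.NeBot] {u K : ℝ} (hg : Tendsto g l (𝓝 0))
    (hK : 0 < K)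
    (h : ∀ᶠ i in l, 0 < g i ∧ K * exp (u / g i) ≤ P.real (S i)) :
    (u : EReal) ≤ liminf (fun i => (g i : EReal) * eLogProb (P (S i))) l := by
  have hlim : Tendsto (fun i => ((u + g i * log K : ℝ) : EReal)) l (𝓝 (u : EReal)) := by
    refine continuous_coe_real_ereal.continuousAt.tendsto.comp ?_
    simpa using tendsto_const_nhds.add (hg.mul_const (log K))
  rw [← hlim.liminf_eq]
  refine liminf_le_liminf (h.mono fun i hi => le_coe_mul_eLogProb hi.1 ?_)
  calc exp ((u + g i * log K) / g i) = K * exp (u / g i) := by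
        rw [add_div, mul_div_cancel_left₀ _ hi.1.ne', exp_add, exp_log hK, mul_comm]
    _ ≤ P.real (S i) := hi.2

lemma eventually_exp_neg_div_le (hg : Tendsto g l (𝓝[>] 0)) {D ε : ℝ} (hD : 0 < D)
    (hε : 0 < ε) :
    ∀ᶠ i in l, exp (-D / g i) ≤ ε := by
  have hlim : Tendsto (fun i => exp (-(D * (g i)⁻¹))) l (𝓝 0) :=
    tendsto_exp_neg_atTop_nhds_zero.comp (hg.inv_tendsto_nhdsGT_zero.const_mul_atTop hD)
  filter_upwards [hlim.eventually (ge_mem_nhds hε)] with i hi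
  rwa [neg_div, div_eq_mul_inv]

end Asymptotics

section LastZero

variable {Ω : Type*} [MeasurableSpace Ω] {P : Measure Ω} [IsProbabilityMeasure P]
  {T : ℝ → Ω → ℝ} {μ t : ℝ}

/-- `T r` has the law of the last zero on `[0, t]` of a Brownian motion with drift `μ √r`. -/
def HasLastZeroCdf (P : Measure Ω) (T : ℝ → Ω → ℝ) (μ t : ℝ) : Prop :=
  ∀ r > 0, ∀ a ∈ Ioc 0 t,
    P {ω | T r ω ≤ a} = ENNReal.ofReal (1 - (2 / π) *
      ∫ y in (0:ℝ)..√((t - a) / a),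
        exp (-((μ * √r) ^ 2 / 2) * a * (1 + y ^ 2)) / (1 + y ^ 2))

lemma probReal_lt_eq (hcdf : HasLastZeroCdf P T μ t) {r a : ℝ} (hmeas : Measurable (T r))
    (hr : 0 < r) (ha : a ∈ Ioc 0 t) :
    P.real {ω | a < T r ω} =
      (2 / π) * lastZeroIntegral (μ ^ 2 * r * a / 2) √((t - a) / a) := by
  set I := lastZeroIntegral (μ ^ 2 * r * a / 2) √((t - a) / a)
  have hI : (∫ y in (0:ℝ)..√((t - a) / a),
      exp (-((μ * √r) ^ 2 / 2) * a * (1 + y ^ 2)) / (1 + y ^ 2)) = I := by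
    refine intervalIntegral.integral_congr fun y _ => ?_
    simp only [mul_pow, sq_sqrt hr.le]
    ring_nf
  have hc : 0 ≤ μ ^ 2 * r * a / 2 := by have := ha.1; positivity
  have hI_le : (2 / π) * I ≤ 1 :=
    (two_div_pi_mul_lastZeroIntegral_le hc (sqrt_nonneg _)).trans
      (exp_le_one_iff.2 (neg_nonpos.2 hc))
  have hcompl : {ω | a < T r ω} = {ω | T r ω ≤ a}ᶜ := by ext; simp
  rw [hcompl, probReal_compl_eq_one_sub (s := {ω | T r ω ≤ a}) (hmeas measurableSet_Iic),
    measureReal_def, hcdf r hr a ha, hI, ENNReal.toReal_ofReal (by linarith)]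
  ring

lemma probReal_lt_le_exp (hcdf : HasLastZeroCdf P T μ t) {r a : ℝ} (hmeas : Measurable (T r))
    (hr : 0 < r) (ha : a ∈ Ioc 0 t) :
    P.real {ω | a < T r ω} ≤ exp (-(μ ^ 2 * r * a / 2)) := by
  rw [probReal_lt_eq hcdf hmeas hr ha]
  exact two_div_pi_mul_lastZeroIntegral_le (by have := ha.1; positivity) (sqrt_nonneg _)

/-- Restrict the integral to `[0, ε]` with `1 + ε² = a' / a`: the integrand there is at least
`exp (-c (1 + ε²)) / (1 + ε²)`. -/
lemma mul_exp_le_probReal_lt (hcdf : HasLastZeroCdf P T μ t) {r a a' : ℝ}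
    (hmeas : Measurable (T r)) (hr : 0 < r) (ha : 0 < a) (haa' : a < a') (ha't : a' ≤ t) :
    (2 / π) * (√(a' / a - 1) / (a' / a)) * exp (-(μ ^ 2 * r * a' / 2)) ≤
      P.real {ω | a < T r ω} := by
  set ε := √(a' / a - 1)
  have hq : 1 < a' / a := (one_lt_div ha).2 haa'
  have hε : 0 < ε := sqrt_pos.2 (by linarith)
  have hε2 : 1 + ε ^ 2 = a' / a := by rw [sq_sqrt (by linarith)]; ring
  have hεM : ε ≤ √((t - a) / a) := by
    apply sqrt_le_sqrt
    rw [div_sub_one ha.ne']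
    gcongr
  have hexp : μ ^ 2 * r * a / 2 * (1 + ε ^ 2) = μ ^ 2 * r * a' / 2 := by
    rw [hε2]; field_simp
  rw [probReal_lt_eq hcdf hmeas hr ⟨ha, haa'.le.trans ha't⟩]
  calc (2 / π) * (ε / (a' / a)) * exp (-(μ ^ 2 * r * a' / 2))
      = (2 / π) * (ε * (exp (-(μ ^ 2 * r * a / 2 * (1 + ε ^ 2))) / (1 + ε ^ 2))) := by
        rw [hexp, hε2]; ring
    _ ≤ (2 / π) * lastZeroIntegral (μ ^ 2 * r * a / 2) √((t - a) / a) := by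
        gcongr
        exact mul_le_lastZeroIntegral (by positivity) hε hεM

end LastZero

lemma setOf_rateJtilde_le {μ : ℝ} (hμ : μ ≠ 0) (η : ℝ) :
    {b : ℝ | rateJtilde μ b ≤ (η : EReal)} = Icc 0 (2 * η / μ ^ 2) := by
  ext b
  have hμ2 : 0 < μ ^ 2 := by positivity
  simp only [rateJtilde, mem_ofPred_eq, mem_Icc]
  split_ifs with hb
  · rw [EReal.coe_le_coe_iff, le_div_iff₀ hμ2]
    constructor
    · intro h; exact ⟨hb, by linarith⟩
    · intro h; linarith [h.2]
  · simp [hb]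

lemma setOf_lt_mul_eq {Ω : Type*} {T : ℝ → Ω → ℝ} {r g b : ℝ} (hrg : 0 < r * g) :
    {ω | b < r * g * T r ω} = {ω | b / (r * g) < T r ω} :=
  Set.ext fun _ => (div_lt_iff₀' hrg).symm

section Scaling

variable {Ω : Type*} [MeasurableSpace Ω] {P : Measure Ω} [IsProbabilityMeasure P]
  {T : ℝ → Ω → ℝ} {μ t : ℝ} {γ : ℝ → ℝ}

lemma eventually_div_mul_le (ht : 0 < t) (hγpos : ∀ r > 0, 0 < γ r)
    (hrγ : Tendsto (fun r => r * γ r) atTop atTop) (b : ℝ) :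
    ∀ᶠ r in atTop, 0 < r ∧ 0 < γ r ∧ b / (r * γ r) ≤ t := by
  filter_upwards [eventually_gt_atTop 0, hrγ.eventually_ge_atTop (b / t)] with r hr hge
  have hrγ : 0 < r * γ r := mul_pos hr (hγpos r hr)
  exact ⟨hr, hγpos r hr, (div_le_iff₀ hrγ).2 (by rwa [div_le_iff₀ ht, mul_comm] at hge)⟩

lemma eventually_probReal_lt_mul_le_exp (hcdf : HasLastZeroCdf P T μ t)
    (hmeas : ∀ r, Measurable (T r)) (ht : 0 < t) (hγpos : ∀ r > 0, 0 < γ r)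
    (hrγ : Tendsto (fun r => r * γ r) atTop atTop) {b : ℝ} (hb : 0 < b) :
    ∀ᶠ r in atTop,
      0 < γ r ∧ P.real {ω | b < r * γ r * T r ω} ≤ exp (-(μ ^ 2 * b / 2) / γ r) := by
  filter_upwards [eventually_div_mul_le ht hγpos hrγ b] with r ⟨hr, hγ, hbt⟩
  have hrγ : 0 < r * γ r := mul_pos hr hγ
  refine ⟨hγ, ?_⟩
  rw [setOf_lt_mul_eq hrγ]
  convert probReal_lt_le_exp hcdf (hmeas r) hr ⟨div_pos hb hrγ, hbt⟩ using 2
  field_simp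

lemma exists_eventually_mul_exp_le_probReal_lt_mul (hcdf : HasLastZeroCdf P T μ t)
    (hmeas : ∀ r, Measurable (T r)) (ht : 0 < t) (hγpos : ∀ r > 0, 0 < γ r)
    (hrγ : Tendsto (fun r => r * γ r) atTop atTop) {b b' : ℝ} (hb : 0 < b) (hbb' : b < b') :
    ∃ K > 0, ∀ᶠ r in atTop,
      0 < γ r ∧ K * exp (-(μ ^ 2 * b' / 2) / γ r) ≤ P.real {ω | b < r * γ r * T r ω} := by
  have hq : 1 < b' / b := (one_lt_div hb).2 hbb'
  refine ⟨(2 / π) * (√(b' / b - 1) / (b' / b)),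
    by have := sqrt_pos.2 (sub_pos.2 hq); positivity, ?_⟩
  filter_upwards [eventually_div_mul_le ht hγpos hrγ b'] with r ⟨hr, hγ, hb't⟩
  have hrγ : 0 < r * γ r := mul_pos hr hγ
  refine ⟨hγ, ?_⟩
  rw [setOf_lt_mul_eq hrγ]
  have hratio : b' / (r * γ r) / (b / (r * γ r)) = b' / b := by field_simp
  have hexp : -(μ ^ 2 * b' / 2) / γ r = -(μ ^ 2 * r * (b' / (r * γ r)) / 2) := by field_simp
  rw [hexp, ← hratio]
  exact mul_exp_le_probReal_lt hcdf (hmeas r) hr (div_pos hb hrγ)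
    (div_lt_div_of_pos_right hbb' hrγ) hb't

lemma limsup_coe_mul_eLogProb_le_zero (hγpos : ∀ r > 0, 0 < γ r) (S : Set ℝ) :
    limsup (fun r => (γ r : EReal) * eLogProb (P {ω | r * γ r * T r ω ∈ S})) atTop ≤
      (0 : ℝ) :=
  limsup_coe_mul_eLogProb_le <| (eventually_gt_atTop 0).mono fun r hr =>
    ⟨hγpos r hr, by rw [zero_div, exp_zero]; exact measureReal_le_one⟩

lemma limsup_coe_mul_eLogProb_le_of_lt (hcdf : HasLastZeroCdf P T μ t)
    (hmeas : ∀ r, Measurable (T r)) (ht : 0 < t) (hγpos : ∀ r > 0, 0 < γ r)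
    (hrγ : Tendsto (fun r => r * γ r) atTop atTop) (hT : ∀ r > 0, ∀ ω, 0 ≤ T r ω)
    {b : ℝ} (hb : 0 < b) {C : Set ℝ} (hC : ∀ x ∈ C, 0 ≤ x → b < x) :
    limsup (fun r => (γ r : EReal) * eLogProb (P {ω | r * γ r * T r ω ∈ C})) atTop ≤
      (-(μ ^ 2 * b / 2) : ℝ) := by
  refine limsup_coe_mul_eLogProb_le ?_
  filter_upwards [eventually_gt_atTop 0,
    eventually_probReal_lt_mul_le_exp hcdf hmeas ht hγpos hrγ hb] with r hr ⟨hγ, hle⟩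
  refine ⟨hγ, le_trans (measureReal_mono (s₂ := {ω | b < r * γ r * T r ω})
    fun ω hω => hC _ hω (mul_nonneg (mul_pos hr hγ).le (hT r hr ω))) hle⟩

lemma limsup_coe_mul_eLogProb_le_neg_iInf (hμ : μ ≠ 0) (hcdf : HasLastZeroCdf P T μ t)
    (hmeas : ∀ r, Measurable (T r)) (ht : 0 < t) (hγpos : ∀ r > 0, 0 < γ r)
    (hrγ : Tendsto (fun r => r * γ r) atTop atTop) (hT : ∀ r > 0, ∀ ω, 0 ≤ T r ω)
    (C : Set ℝ) :
    limsup (fun r => (γ r : EReal) * eLogProb (P {ω | r * γ r * T r ω ∈ C})) atTop ≤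
      -⨅ b ∈ C, rateJtilde μ b := by
  refine EReal.le_of_forall_lt_iff_le.1 fun z hz => ?_
  rcases le_or_gt 0 z with hz0 | hz0
  · exact (limsup_coe_mul_eLogProb_le_zero hγpos C).trans (EReal.coe_le_coe_iff.2 hz0)
  have hμ2 : 0 < μ ^ 2 := by positivity
  have hC : ∀ x ∈ C, 0 ≤ x → 2 * -z / μ ^ 2 < x := by
    intro x hx hx0
    by_contra! hxb
    have hJ : rateJtilde μ x ≤ ((-z : ℝ) : EReal) := by
      rw [← mem_ofPred_eq (p := fun b => rateJtilde μ b ≤ ((-z : ℝ) : EReal)),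
        setOf_rateJtilde_le hμ]
      exact ⟨hx0, hxb⟩
    have hlt : ((-z : ℝ) : EReal) < ⨅ b ∈ C, rateJtilde μ b := by
      rw [EReal.coe_neg]; exact EReal.neg_lt_comm.1 hz
    exact (hlt.trans_le ((iInf₂_le x hx).trans hJ)).false
  convert limsup_coe_mul_eLogProb_le_of_lt hcdf hmeas ht hγpos hrγ hT
    (div_pos (by linarith) hμ2) hC using 2
  field_simp

/-- For `b₁ < b' < b₂` the tail beyond `b₂` is smaller than `exp (-μ² b' / (2γ))` by a factor
`exp (-μ² (b₂ - b') / (2γ)) → 0`, so `(b₁, b₂]` keeps half of the lower bound on the tail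
beyond `b₁`. -/
lemma le_liminf_coe_mul_eLogProb_of_Ioc_subset (hμ : μ ≠ 0) (hcdf : HasLastZeroCdf P T μ t)
    (hmeas : ∀ r, Measurable (T r)) (ht : 0 < t) (hγpos : ∀ r > 0, 0 < γ r)
    (hγ0 : Tendsto γ atTop (𝓝 0)) (hrγ : Tendsto (fun r => r * γ r) atTop atTop)
    {b₁ b₂ : ℝ} (hb₁ : 0 < b₁) (hb₁₂ : b₁ < b₂) {G : Set ℝ} (hG : Ioc b₁ b₂ ⊆ G) :
    ((-(μ ^ 2 * b₂ / 2) : ℝ) : EReal) ≤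
      liminf (fun r => (γ r : EReal) * eLogProb (P {ω | r * γ r * T r ω ∈ G})) atTop := by
  obtain ⟨b', hb₁', hb'₂⟩ := exists_between hb₁₂
  obtain ⟨K, hK, hlow⟩ := exists_eventually_mul_exp_le_probReal_lt_mul hcdf hmeas ht hγpos hrγ
    hb₁ hb₁'
  have hγ0' : Tendsto γ atTop (𝓝[>] 0) := tendsto_nhdsWithin_iff.2
    ⟨hγ0, (eventually_gt_atTop 0).mono hγpos⟩
  have hμ2 : 0 < μ ^ 2 := by positivity
  have hsmall := eventually_exp_neg_div_le hγ0' (D := μ ^ 2 * (b₂ - b') / 2)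
    (by have := sub_pos.2 hb'₂; positivity) (half_pos hK)
  have hb'b₂ : -(μ ^ 2 * b₂ / 2) ≤ -(μ ^ 2 * b' / 2) := by
    have := mul_le_mul_of_nonneg_left hb'₂.le hμ2.le; linarith
  refine (EReal.coe_le_coe_iff.2 hb'b₂).trans
    (le_liminf_coe_mul_eLogProb hγ0 (half_pos hK) ?_)
  filter_upwards [hlow, eventually_probReal_lt_mul_le_exp hcdf hmeas ht hγpos hrγ
    (hb₁.trans hb₁₂), hsmall] with r ⟨hγ, hlow⟩ ⟨_, hup⟩ hsmall
  refine ⟨hγ, ?_⟩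
  have hsplit : P.real {ω | b₁ < r * γ r * T r ω} ≤
      P.real {ω | r * γ r * T r ω ∈ G} + P.real {ω | b₂ < r * γ r * T r ω} := by
    refine (measureReal_mono fun ω (hω : b₁ < _) => ?_).trans (measureReal_union_le _ _)
    rcases le_or_gt (r * γ r * T r ω) b₂ with h | h
    · exact Or.inl (hG ⟨hω, h⟩)
    · exact Or.inr h
  have hexp : exp (-(μ ^ 2 * b₂ / 2) / γ r) =
      exp (-(μ ^ 2 * b' / 2) / γ r) * exp (-(μ ^ 2 * (b₂ - b') / 2) / γ r) := by
    rw [← exp_add]; ring_nf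
  have := mul_le_mul_of_nonneg_left hsmall (exp_pos (-(μ ^ 2 * b' / 2) / γ r)).le
  nlinarith

lemma neg_iInf_rateJtilde_le_liminf (hμ : μ ≠ 0) (hcdf : HasLastZeroCdf P T μ t)
    (hmeas : ∀ r, Measurable (T r)) (ht : 0 < t) (hγpos : ∀ r > 0, 0 < γ r)
    (hγ0 : Tendsto γ atTop (𝓝 0)) (hrγ : Tendsto (fun r => r * γ r) atTop atTop)
    {G : Set ℝ} (hG : IsOpen G) :
    -⨅ b ∈ G, rateJtilde μ b ≤
      liminf (fun r => (γ r : EReal) * eLogProb (P {ω | r * γ r * T r ω ∈ G})) atTop := by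
  refine EReal.neg_le.2 (le_iInf₂ fun b hb => EReal.neg_le.1 ?_)
  rcases lt_or_ge b 0 with hb0 | hb0
  · simp [rateJtilde, not_le.2 hb0]
  obtain ⟨δ, hδ, hball⟩ := Metric.isOpen_iff.1 hG b hb
  rw [rateJtilde, if_pos hb0, ← EReal.coe_neg]
  -- approach `b` from the right by intervals `((b + b₂) / 2, b₂]`, which avoid `0` also for `b = 0`
  have hlim : Tendsto (fun b₂ : ℝ => ((-(μ ^ 2 * b₂ / 2) : ℝ) : EReal)) (𝓝[>] b)
      (𝓝 ((-(μ ^ 2 * b / 2) : ℝ) : EReal)) :=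
    ((continuous_coe_real_ereal.comp (by fun_prop)).tendsto b).mono_left nhdsWithin_le_nhds
  refine le_of_tendsto hlim ?_
  filter_upwards [Ioo_mem_nhdsGT (by linarith : b < b + δ)] with b₂ ⟨hbb₂, hb₂δ⟩
  refine le_liminf_coe_mul_eLogProb_of_Ioc_subset hμ hcdf hmeas ht hγpos hγ0 hrγ
    (by linarith : 0 < (b + b₂) / 2) (by linarith) fun x hx => hball ?_
  rw [Real.ball_eq_Ioo]
  exact ⟨by linarith [hx.1], by linarith [hx.2]⟩

end Scaling

theorem stmt_12_general (μ t : ℝ) (hμ : μ ≠ 0) (ht : 0 < t)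
    (γ : ℝ → ℝ) (hγpos : ∀ r > 0, 0 < γ r)
    (hγ0 : Tendsto γ atTop (nhds 0))
    (hrγ : Tendsto (fun r => r * γ r) atTop atTop)
    {Ω : Type*} [MeasurableSpace Ω] (P : Measure Ω) [IsProbabilityMeasure P]
    (T : ℝ → Ω → ℝ) (hmeas : ∀ r, Measurable (T r))
    (hrange : ∀ r > 0, ∀ ω, T r ω ∈ Set.Icc 0 t)
    (hcdf : ∀ r > 0, ∀ a ∈ Set.Ioc 0 t,
      P {ω | T r ω ≤ a} = ENNReal.ofReal (1 - (2 / π) *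
        ∫ y in (0:ℝ)..Real.sqrt ((t - a) / a),
          Real.exp (-((μ * Real.sqrt r) ^ 2 / 2) * a * (1 + y ^ 2)) / (1 + y ^ 2))) :
    (∀ η : ℝ, IsCompact {b : ℝ | rateJtilde μ b ≤ (η : EReal)}) ∧
    (∀ C : Set ℝ, IsClosed C →
      limsup (fun r : ℝ =>
          ((γ r : ℝ) : EReal) * eLogProb (P {ω | r * γ r * T r ω ∈ C})) atTop ≤
        -⨅ b ∈ C, rateJtilde μ b) ∧
    (∀ G : Set ℝ, IsOpen G →
      -⨅ b ∈ G, rateJtilde μ b ≤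
        liminf (fun r : ℝ =>
          ((γ r : ℝ) : EReal) * eLogProb (P {ω | r * γ r * T r ω ∈ G})) atTop) :=
  ⟨fun η => setOf_rateJtilde_le hμ η ▸ isCompact_Icc,
    fun C _ => limsup_coe_mul_eLogProb_le_neg_iInf hμ hcdf hmeas ht hγpos hrγ
      (fun r hr ω => (hrange r hr ω).1) C,
    fun _ hG => neg_iInf_rateJtilde_le_liminf hμ hcdf hmeas ht hγpos hγ0 hrγ hG⟩

theorem stmt_12 (μ t : ℝ) (hμ : μ ≠ 0) (ht : 0 < t)
    (γ : ℝ → ℝ) (hγpos : ∀ r > 0, 0 < γ r)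
    (hγ0 : Tendsto γ atTop (nhds 0))
    (hrγ : Tendsto (fun r => r * γ r) atTop atTop)
    {Ω : Type*} [MeasurableSpace Ω] (P : Measure Ω) [IsProbabilityMeasure P]
    (T : ℝ → Ω → ℝ) (hmeas : ∀ r, Measurable (T r))
    (hrange : ∀ r > 0, ∀ ω, T r ω ∈ Set.Icc 0 t)
    (hcdf : ∀ r > 0, ∀ a ∈ Set.Ioc 0 t,
      P {ω | T r ω ≤ a} = ENNReal.ofReal (1 - (2 / π) *
        ∫ y in (0:ℝ)..Real.sqrt ((t - a) / a),
          Real.exp (-((μ * Real.sqrt r) ^ 2 / 2) * a * (1 + y ^ 2)) / (1 + y ^ 2)))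
    (h0 : ∀ r > 0, P {ω | T r ω ≤ 0} = 0) :
    (∀ η : ℝ, IsCompact {b : ℝ | rateJtilde μ b ≤ (η : EReal)}) ∧
    (∀ C : Set ℝ, IsClosed C →
      limsup (fun r : ℝ =>
          ((γ r : ℝ) : EReal) * eLogProb (P {ω | r * γ r * T r ω ∈ C})) atTop ≤
        -⨅ b ∈ C, rateJtilde μ b) ∧
    (∀ G : Set ℝ, IsOpen G →
      -⨅ b ∈ G, rateJtilde μ b ≤
        liminf (fun r : ℝ =>
          ((γ r : ℝ) : EReal) * eLogProb (P {ω | r * γ r * T r ω ∈ G})) atTop) :=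
  stmt_12_general μ t hμ ht γ hγpos hγ0 hrγ P T hmeas hrange hcdf
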